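/- Let f ∈ Dom_+(Γ) be strictly positive and bounded, with b := sup_{x∈𝕏} f(x). Suppose there exists an increasing function g : (0,∞) → (0,∞) with ∫_0^b (1/g(y)) dy < ∞, such that Γf(x) ≤ −g(f(x)) for all x ∈ 𝕏. Then E_x(ζ) < ∞ for all x ∈ 𝕏. -/

import Mathlib

open MeasureTheory Set Filter
open scoped Classical ENNReal NNReal

/-- A continuous-time Markov chain on a countably infinite state space `X`,
described by its generator `Γ`, together with a probability space carrying,
for each starting point `x`, the embedded jump chain `jump` and the holding
times `hold` (with `hold n` the holding time at the `n`-th visited state). -/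
structure CTMC where
  X : Type
  countX : Countable X
  infX : Infinite X
  Γ : X → X → ℝ
  γ : X → ℝ
  γ_pos : ∀ x, 0 < γ x
  Γ_offdiag_nonneg : ∀ x y, y ≠ x → 0 ≤ Γ x y
  Γ_diag : ∀ x, Γ x x = - γ x
  γ_sum : ∀ x, HasSum (fun y => if y = x then 0 else Γ x y) (γ x)
  /-- irreducibility of the embedded jump chain -/
  irr : ∀ x y : X, ∃ (n : ℕ) (path : ℕ → X), path 0 = x ∧ path n = y ∧
    ∀ k, k < n → 0 < (if path (k+1) = path k then 0
      else Γ (path k) (path (k+1)) / γ (path k))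
  Ω : Type
  measΩ : MeasurableSpace Ω
  μ : X → @Measure Ω measΩ
  probμ : ∀ x, @IsProbabilityMeasure Ω measΩ (μ x)
  jump : ℕ → Ω → X
  hold : ℕ → Ω → ℝ
  jump_meas : ∀ (n : ℕ) (x : X), MeasurableSet[measΩ] {ω | jump n ω = x}
  hold_meas : ∀ n : ℕ, @Measurable Ω ℝ measΩ _ (hold n)
  hold_pos : ∀ n ω, 0 < hold n ω
  /-- under `μ x` the chain starts at `x` -/
  start : ∀ x : X, μ x {ω | jump 0 ω = x} = 1
  /-- finite-dimensional law: the embedded chain is Markov with transition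
  probabilities `P x y = Γ x y / γ x` (for `y ≠ x`), and conditionally on the
  embedded chain the holding times are independent exponentials of rates
  `γ (jump n)` -/
  law : ∀ (x : X) (n : ℕ) (path : ℕ → X) (t : ℕ → ℝ), path 0 = x → (∀ k, 0 ≤ t k) →
    μ x {ω | (∀ k, k ≤ n → jump k ω = path k) ∧ (∀ k, k < n → t k < hold k ω)}
      = ENNReal.ofReal (∏ k ∈ Finset.range n,
          ((if path (k+1) = path k then 0 else Γ (path k) (path (k+1)) / γ (path k))
            * Real.exp (-(γ (path k)) * t k)))

namespace CTMC

attribute [instance] CTMC.countX CTMC.infX CTMC.measΩ CTMC.probμ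

variable (M : CTMC)

/-- embedded chain transition probabilities -/
noncomputable def P (x y : M.X) : ℝ := if y = x then 0 else M.Γ x y / M.γ x

/-- jump times -/
noncomputable def J (n : ℕ) (ω : M.Ω) : ℝ := ∑ k ∈ Finset.range n, M.hold k ω

/-- explosion (life) time -/
noncomputable def zeta (ω : M.Ω) : ℝ≥0∞ := ⨆ n, ENNReal.ofReal (M.J n ω)

/-- the continuous-time chain: `pos t ω = some (jump n ω)` if `J n ≤ t < J (n+1)`,
and `none` (the cemetery state `∂`) after the explosion time. -/
noncomputable def pos (t : ℝ) (ω : M.Ω) : Option M.X :=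
  if h : ∃ n, M.J n ω ≤ t ∧ t < M.J (n+1) ω then some (M.jump h.choose ω) else none

/-- passage time: `τ_A = inf {t ≥ 0 : ξ_t ∈ A}` -/
noncomputable def tau (A : Set M.X) (ω : M.Ω) : ℝ≥0∞ :=
  sInf (ENNReal.ofReal '' {s : ℝ | 0 ≤ s ∧ ∃ a ∈ A, M.pos s ω = some a})

/-- `f` belongs to the domain of the generator -/
def InDom (f : M.X → ℝ) : Prop :=
  ∀ x : M.X, Summable (fun y => if y = x then 0 else M.Γ x y * f y)

/-- `f ∈ Dom_+(Γ)` -/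
def InDomPos (f : M.X → ℝ) : Prop := (∀ x, 0 ≤ f x) ∧ M.InDom f

/-- action of the generator : `Γ f (x) = ∑_y Γ_{xy} f(y)` -/
noncomputable def gen (f : M.X → ℝ) (x : M.X) : ℝ :=
  (∑' y, if y = x then 0 else M.Γ x y * f y) - M.γ x * f x

/-- recurrence of the embedded jump chain -/
def JumpRecurrent : Prop := ∀ x : M.X, M.μ x {ω | ∃ n, 1 ≤ n ∧ M.jump n ω = x} = 1

/-- `f → ∞` : all sublevel sets are finite -/
def FinSublevels (f : M.X → ℝ) : Prop := ∀ r : ℝ, {x : M.X | f x ≤ r}.Finite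

end CTMC

/-!
Put `Φ w = ∫_0^w dy / g y` and `V = Φ ∘ f`, so that `V ≤ Φ b < ∞`. Since `1 / g` is decreasing,
`Φ` is concave: `Φ v ≤ Φ u + (v - u) / g u`. Averaging this over one jump from `x` and using
`∑_y P x y f y = f x + Γ f x / γ x ≤ f x - g (f x) / γ x` gives
`1 / γ x + ∑_y P x y V y ≤ V x`. Hence `∑_{k<n} σ_{k+1} + V (ξ̃_n)` is a supermartingale, the
expected holding times sum to at most `V x`, and `E_x ζ ≤ V x`. The law of the chain is only
given on cylinder sets, so the one-step identities `E_x σ_{n+1} = E_x (1 / γ (ξ̃_n))` and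
`E_x h (ξ̃_{n+1}) = E_x (P h) (ξ̃_n)` behind the supermartingale property are checked cylinder by
cylinder.
-/

theorem MeasureTheory.lintegral_eq_tsum_setLIntegral_preimage {α ι : Type*} [MeasurableSpace α]
    [Countable ι] (μ : Measure α) {π : α → ι} (hπ : ∀ i, MeasurableSet (π ⁻¹' {i}))
    (F : α → ℝ≥0∞) : ∫⁻ a, F a ∂μ = ∑' i, ∫⁻ a in π ⁻¹' {i}, F a ∂μ := by
  rw [← lintegral_iUnion hπ (pairwise_disjoint_fiber π), ← preimage_iUnion, iUnion_of_singleton,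
    preimage_univ, setLIntegral_univ]

theorem MeasureTheory.measure_eq_tsum_preimage_inter {α ι : Type*} [MeasurableSpace α]
    [Countable ι] (μ : Measure α) {π : α → ι} (hπ : ∀ i, MeasurableSet (π ⁻¹' {i}))
    (s : Set α) : μ s = ∑' i, μ (π ⁻¹' {i} ∩ s) := by
  simpa [Measure.restrict_apply (hπ _)] using
    lintegral_eq_tsum_setLIntegral_preimage (μ.restrict s) hπ 1

theorem lintegral_exp_neg_mul_Ioi_zero {c : ℝ} (hc : 0 < c) :
    ∫⁻ t in Ioi 0, ENNReal.ofReal (Real.exp (-c * t)) = ENNReal.ofReal c⁻¹ := by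
  rw [← ofReal_integral_eq_lintegral_ofReal (exp_neg_integrableOn_Ioi 0 hc)
    (ae_of_all _ fun _ => (Real.exp_pos _).le), integral_exp_mul_Ioi (neg_neg_of_pos hc)]
  simp

section AntitoneIntegral

variable {φ : ℝ → ℝ≥0∞}

lemma lintegral_Ioc_le_of_antitoneOn (hφ : AntitoneOn φ (Ioi 0)) {u : ℝ} (hu : 0 < u) (v : ℝ) :
    ∫⁻ y in Ioc u v, φ y ≤ φ u * ENNReal.ofReal (v - u) := by
  calc ∫⁻ y in Ioc u v, φ y ≤ ∫⁻ _ in Ioc u v, φ u :=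
        setLIntegral_mono' measurableSet_Ioc fun y hy => hφ hu (hu.trans hy.1) hy.1.le
    _ = φ u * ENNReal.ofReal (v - u) := by rw [setLIntegral_const, Real.volume_Ioc]

lemma le_lintegral_Ioc_of_antitoneOn (hφ : AntitoneOn φ (Ioi 0)) {v : ℝ} (hv : 0 < v) (u : ℝ) :
    φ u * ENNReal.ofReal (u - v) ≤ ∫⁻ y in Ioc v u, φ y := by
  calc φ u * ENNReal.ofReal (u - v) = ∫⁻ _ in Ioc v u, φ u := by
        rw [setLIntegral_const, Real.volume_Ioc]
    _ ≤ ∫⁻ y in Ioc v u, φ y := setLIntegral_mono' measurableSet_Ioc fun y hy =>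
        hφ (hv.trans hy.1) (hv.trans (hy.1.trans_le hy.2)) hy.2

lemma lintegral_Ioc_zero_eq_add {u v : ℝ} (hu : 0 ≤ u) (huv : u ≤ v) :
    ∫⁻ y in Ioc 0 v, φ y = (∫⁻ y in Ioc 0 u, φ y) + ∫⁻ y in Ioc u v, φ y := by
  rw [← lintegral_union measurableSet_Ioc (Ioc_disjoint_Ioc_of_le le_rfl),
    Ioc_union_Ioc_eq_Ioc hu huv]

/-- Concavity of `w ↦ ∫_0^w φ`, i.e. `Φ v ≤ Φ u + φ u (v - u)`, with both sides moved so that no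
subtraction occurs. -/
lemma lintegral_Ioc_zero_add_mul_le (hφ : AntitoneOn φ (Ioi 0)) {u v : ℝ} (hu : 0 < u)
    (hv : 0 < v) :
    (∫⁻ y in Ioc 0 v, φ y) + φ u * ENNReal.ofReal u ≤
      (∫⁻ y in Ioc 0 u, φ y) + φ u * ENNReal.ofReal v := by
  rcases le_total u v with huv | hvu
  · calc (∫⁻ y in Ioc 0 v, φ y) + φ u * ENNReal.ofReal u
        ≤ (∫⁻ y in Ioc 0 u, φ y) + φ u * ENNReal.ofReal (v - u) + φ u * ENNReal.ofReal u := by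
          rw [lintegral_Ioc_zero_eq_add hu.le huv]
          gcongr
          exact lintegral_Ioc_le_of_antitoneOn hφ hu v
      _ = (∫⁻ y in Ioc 0 u, φ y) + φ u * ENNReal.ofReal v := by
          rw [add_assoc, ← mul_add, ← ENNReal.ofReal_add (sub_nonneg.2 huv) hu.le, sub_add_cancel]
  · calc (∫⁻ y in Ioc 0 v, φ y) + φ u * ENNReal.ofReal u
        = (∫⁻ y in Ioc 0 v, φ y) + φ u * ENNReal.ofReal (u - v) + φ u * ENNReal.ofReal v := by
          rw [add_assoc, ← mul_add, ← ENNReal.ofReal_add (sub_nonneg.2 hvu) hv.le, sub_add_cancel]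
      _ ≤ (∫⁻ y in Ioc 0 u, φ y) + φ u * ENNReal.ofReal v := by
          rw [lintegral_Ioc_zero_eq_add hv.le hvu]
          gcongr
          exact le_lintegral_Ioc_of_antitoneOn hφ hv u

end AntitoneIntegral

namespace CTMC

variable (M : CTMC)

lemma P_nonneg (x y : M.X) : 0 ≤ M.P x y := by
  unfold P
  split_ifs with h
  exacts [le_rfl, div_nonneg (M.Γ_offdiag_nonneg x y h) (M.γ_pos x).le]

lemma hasSum_P (x : M.X) : HasSum (M.P x) 1 := by
  have h := (M.γ_sum x).div_const (M.γ x)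
  rw [div_self (M.γ_pos x).ne'] at h
  refine h.congr_fun fun y => ?_
  simp only [P]
  split_ifs <;> simp

noncomputable def transProb (x y : M.X) : ℝ≥0∞ := ENNReal.ofReal (M.P x y)

noncomputable def meanHold (x : M.X) : ℝ≥0∞ := ENNReal.ofReal (M.γ x)⁻¹

lemma tsum_transProb (x : M.X) : ∑' y, M.transProb x y = 1 := by
  simp only [transProb]
  rw [← ENNReal.ofReal_tsum_of_nonneg (M.P_nonneg x) (M.hasSum_P x).summable,
    (M.hasSum_P x).tsum_eq, ENNReal.ofReal_one]

def cylinder (n : ℕ) (p : ℕ → M.X) : Set M.Ω := {ω | ∀ k ≤ n, M.jump k ω = p k}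

lemma measurableSet_cylinder (n : ℕ) (p : ℕ → M.X) : MeasurableSet (M.cylinder n p) := by
  simp only [cylinder, ofPred_forall]
  exact .iInter fun k => .iInter fun _ => M.jump_meas k (p k)

lemma measurableSet_jump_preimage (n : ℕ) (z : M.X) : MeasurableSet (M.jump n ⁻¹' {z}) :=
  M.jump_meas n z

lemma ae_jump_zero (x : M.X) : ∀ᵐ ω ∂M.μ x, M.jump 0 ω = x :=
  (prob_compl_eq_zero_iff (M.jump_meas 0 x)).2 (M.start x)

lemma measure_cylinder_of_ne {x : M.X} {n : ℕ} {p : ℕ → M.X} (hp : p 0 ≠ x) :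
    M.μ x (M.cylinder n p) = 0 :=
  measure_mono_null (fun _ hω h => hp (hω 0 n.zero_le ▸ h)) (ae_iff.1 (M.ae_jump_zero x))

lemma lintegral_eq_of_setLIntegral_cylinder_eq (x : M.X) (n : ℕ) {F F' : M.Ω → ℝ≥0∞}
    (h : ∀ p : ℕ → M.X, p 0 = x →
      ∫⁻ ω in M.cylinder n p, F ω ∂M.μ x = ∫⁻ ω in M.cylinder n p, F' ω ∂M.μ x) :
    ∫⁻ ω, F ω ∂M.μ x = ∫⁻ ω, F' ω ∂M.μ x := by
  set path : M.Ω → Fin (n + 1) → M.X := fun ω k => M.jump k ω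
  have hfib (v : Fin (n + 1) → M.X) :
      path ⁻¹' {v} = M.cylinder n (fun k => v (Fin.clamp k n)) := by
    ext ω
    simp only [mem_preimage, mem_singleton_iff, cylinder, mem_ofPred_eq, funext_iff, path]
    refine ⟨fun hv k hk => ?_, fun hv k => ?_⟩
    · rw [← hv]; simp [Fin.clamp, hk]
    · rw [hv k k.is_le]; simp [Fin.clamp, k.is_le]
  have hmeas (v : Fin (n + 1) → M.X) : MeasurableSet (path ⁻¹' {v}) :=
    hfib v ▸ M.measurableSet_cylinder n _
  rw [lintegral_eq_tsum_setLIntegral_preimage _ hmeas,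
    lintegral_eq_tsum_setLIntegral_preimage _ hmeas]
  refine tsum_congr fun v => ?_
  rw [hfib]
  by_cases hv : v (Fin.clamp 0 n) = x
  · exact h _ hv
  · have hnull := M.measure_cylinder_of_ne (n := n) (p := fun k => v (Fin.clamp k n)) hv
    simp [Measure.restrict_eq_zero.2 hnull]

lemma measure_cylinder {x : M.X} (n : ℕ) {p : ℕ → M.X} (hp : p 0 = x) :
    M.μ x (M.cylinder n p) = ENNReal.ofReal (∏ k ∈ Finset.range n, M.P (p k) (p (k + 1))) := by
  have h := M.law x n p 0 hp fun _ => le_rfl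
  simp only [Pi.zero_apply, mul_zero, Real.exp_zero, mul_one, M.hold_pos, implies_true,
    and_true] at h
  exact h

lemma cylinder_inter_jump_inter_hold_eq (n : ℕ) (p : ℕ → M.X) (z : M.X) (t : ℝ) :
    M.cylinder n p ∩ M.jump (n + 1) ⁻¹' {z} ∩ {ω | t < M.hold n ω} =
      {ω | (∀ k ≤ n + 1, M.jump k ω = Function.update p (n + 1) z k) ∧
        ∀ k < n + 1, (if k = n then t else 0) < M.hold k ω} := by
  ext ω
  simp only [cylinder, mem_inter_iff, mem_ofPred_eq, mem_preimage, mem_singleton_iff]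
  constructor
  · rintro ⟨⟨hpath, hz⟩, hhold⟩
    refine ⟨fun k hk => ?_, fun k hk => ?_⟩
    · rcases Nat.lt_or_eq_of_le hk with hk | rfl
      · rw [Function.update_of_ne (by omega)]; exact hpath k (by omega)
      · simpa using hz
    · by_cases hkn : k = n
      · simpa [hkn] using hhold
      · simpa [hkn] using M.hold_pos k ω
  · rintro ⟨hpath, hhold⟩
    refine ⟨⟨fun k hk => ?_, ?_⟩, ?_⟩
    · rw [hpath k (by omega), Function.update_of_ne (by omega)]
    · simpa using hpath (n + 1) le_rfl
    · simpa using hhold n n.lt_succ_self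

lemma measure_cylinder_inter_jump_inter_hold {x : M.X} (n : ℕ) {p : ℕ → M.X} (hp : p 0 = x)
    (z : M.X) {t : ℝ} (ht : 0 ≤ t) :
    M.μ x (M.cylinder n p ∩ M.jump (n + 1) ⁻¹' {z} ∩ {ω | t < M.hold n ω}) =
      M.μ x (M.cylinder n p) * M.transProb (p n) z *
        ENNReal.ofReal (Real.exp (-M.γ (p n) * t)) := by
  set q := Function.update p (n + 1) z
  set s : ℕ → ℝ := fun k => if k = n then t else 0
  have hq : ∀ k ≤ n, q k = p k := fun k hk => Function.update_of_ne (by omega) _ _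
  have hprod : ∏ k ∈ Finset.range (n + 1),
      (M.P (q k) (q (k + 1)) * Real.exp (-M.γ (q k) * s k)) =
      (∏ k ∈ Finset.range n, M.P (p k) (p (k + 1))) *
        (M.P (p n) z * Real.exp (-M.γ (p n) * t)) := by
    rw [Finset.prod_range_succ]
    congr 1
    · refine Finset.prod_congr rfl fun k hk => ?_
      rw [Finset.mem_range] at hk
      simp [s, hq k hk.le, hq (k + 1) hk, hk.ne]
    · simp [s, q]
  have hlaw : M.μ x {ω | (∀ k ≤ n + 1, M.jump k ω = q k) ∧ ∀ k < n + 1, s k < M.hold k ω} =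
      ENNReal.ofReal (∏ k ∈ Finset.range (n + 1),
        (M.P (q k) (q (k + 1)) * Real.exp (-M.γ (q k) * s k))) :=
    M.law x (n + 1) q s (by rw [hq 0 n.zero_le, hp]) fun k => by
      simp only [s]; split_ifs <;> simp [ht]
  have hweight : 0 ≤ ∏ k ∈ Finset.range n, M.P (p k) (p (k + 1)) :=
    Finset.prod_nonneg fun k _ => M.P_nonneg _ _
  rw [M.cylinder_inter_jump_inter_hold_eq, hlaw, hprod, M.measure_cylinder n hp, transProb,
    ← ENNReal.ofReal_mul, ← ENNReal.ofReal_mul, mul_assoc]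
  · exact mul_nonneg hweight (M.P_nonneg _ _)
  · exact hweight

lemma measure_cylinder_inter_jump {x : M.X} (n : ℕ) {p : ℕ → M.X} (hp : p 0 = x) (z : M.X) :
    M.μ x (M.cylinder n p ∩ M.jump (n + 1) ⁻¹' {z}) =
      M.μ x (M.cylinder n p) * M.transProb (p n) z := by
  simpa [M.hold_pos] using M.measure_cylinder_inter_jump_inter_hold n hp z le_rfl

lemma measure_cylinder_inter_hold {x : M.X} (n : ℕ) {p : ℕ → M.X} (hp : p 0 = x) {t : ℝ}
    (ht : 0 ≤ t) :
    M.μ x (M.cylinder n p ∩ {ω | t < M.hold n ω}) =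
      M.μ x (M.cylinder n p) * ENNReal.ofReal (Real.exp (-M.γ (p n) * t)) := by
  rw [measure_eq_tsum_preimage_inter _ (M.measurableSet_jump_preimage (n + 1))]
  simp_rw [← inter_assoc, inter_comm _ (M.cylinder n p),
    M.measure_cylinder_inter_jump_inter_hold n hp _ ht, ENNReal.tsum_mul_right,
    ENNReal.tsum_mul_left, tsum_transProb, mul_one]

lemma setLIntegral_cylinder_hold {x : M.X} (n : ℕ) {p : ℕ → M.X} (hp : p 0 = x) :
    ∫⁻ ω in M.cylinder n p, ENNReal.ofReal (M.hold n ω) ∂M.μ x =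
      M.μ x (M.cylinder n p) * M.meanHold (p n) := by
  rw [lintegral_eq_lintegral_meas_lt _ (ae_of_all _ fun ω => (M.hold_pos n ω).le)
    (M.hold_meas n).aemeasurable]
  rw [setLIntegral_congr_fun measurableSet_Ioi fun t ht => by
    rw [Measure.restrict_apply (measurableSet_lt measurable_const (M.hold_meas n)), inter_comm,
      M.measure_cylinder_inter_hold n hp (le_of_lt ht)]]
  rw [lintegral_const_mul _ (by fun_prop), lintegral_exp_neg_mul_Ioi_zero (M.γ_pos _), meanHold]

lemma setLIntegral_cylinder_comp_jump {x : M.X} (n : ℕ) (p : ℕ → M.X) (h : M.X → ℝ≥0∞) :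
    ∫⁻ ω in M.cylinder n p, h (M.jump n ω) ∂M.μ x = M.μ x (M.cylinder n p) * h (p n) := by
  rw [setLIntegral_congr_fun (M.measurableSet_cylinder n p) fun ω hω => by rw [hω n le_rfl],
    setLIntegral_const, mul_comm]

lemma setLIntegral_cylinder_comp_jump_succ {x : M.X} (n : ℕ) {p : ℕ → M.X} (hp : p 0 = x)
    (h : M.X → ℝ≥0∞) :
    ∫⁻ ω in M.cylinder n p, h (M.jump (n + 1) ω) ∂M.μ x =
      M.μ x (M.cylinder n p) * ∑' z, M.transProb (p n) z * h z := by
  have hfib := M.measurableSet_jump_preimage (n + 1)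
  rw [lintegral_eq_tsum_setLIntegral_preimage _ hfib, ← ENNReal.tsum_mul_left]
  refine tsum_congr fun z => ?_
  rw [setLIntegral_congr_fun (hfib z) fun ω hω => by rw [mem_singleton_iff.1 hω],
    setLIntegral_const, Measure.restrict_apply (hfib z), inter_comm,
    M.measure_cylinder_inter_jump n hp, mul_comm, mul_assoc]

lemma lintegral_hold (x : M.X) (n : ℕ) :
    ∫⁻ ω, ENNReal.ofReal (M.hold n ω) ∂M.μ x = ∫⁻ ω, M.meanHold (M.jump n ω) ∂M.μ x :=
  M.lintegral_eq_of_setLIntegral_cylinder_eq x n fun p hp => by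
    rw [M.setLIntegral_cylinder_hold n hp, M.setLIntegral_cylinder_comp_jump]

lemma lintegral_comp_jump_succ (x : M.X) (n : ℕ) (h : M.X → ℝ≥0∞) :
    ∫⁻ ω, h (M.jump (n + 1) ω) ∂M.μ x =
      ∫⁻ ω, ∑' z, M.transProb (M.jump n ω) z * h z ∂M.μ x :=
  M.lintegral_eq_of_setLIntegral_cylinder_eq x n fun p hp => by
    rw [M.setLIntegral_cylinder_comp_jump_succ n hp,
      M.setLIntegral_cylinder_comp_jump n p fun y => ∑' z, M.transProb y z * h z]

lemma zeta_eq_tsum_hold (ω : M.Ω) : M.zeta ω = ∑' n, ENNReal.ofReal (M.hold n ω) := by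
  rw [ENNReal.tsum_eq_iSup_nat, zeta]
  congr with n
  exact ENNReal.ofReal_sum_of_nonneg fun k _ => (M.hold_pos k ω).le

lemma lintegral_zeta (x : M.X) :
    ∫⁻ ω, M.zeta ω ∂M.μ x = ∑' n, ∫⁻ ω, ENNReal.ofReal (M.hold n ω) ∂M.μ x := by
  simp_rw [zeta_eq_tsum_hold]
  exact lintegral_tsum fun n => (M.hold_meas n).ennreal_ofReal.aemeasurable

lemma lintegral_comp_jump_zero (x : M.X) (h : M.X → ℝ≥0∞) :
    ∫⁻ ω, h (M.jump 0 ω) ∂M.μ x = h x := by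
  rw [lintegral_congr_ae ((M.ae_jump_zero x).mono fun ω hω => by rw [hω]), lintegral_const,
    measure_univ, mul_one]

lemma sum_lintegral_hold_add_lintegral_le_of_drift {V : M.X → ℝ≥0∞}
    (hV : ∀ y, M.meanHold y + ∑' z, M.transProb y z * V z ≤ V y) (x : M.X) (n : ℕ) :
    ∑ k ∈ Finset.range n, ∫⁻ ω, ENNReal.ofReal (M.hold k ω) ∂M.μ x +
      ∫⁻ ω, V (M.jump n ω) ∂M.μ x ≤ V x := by
  induction n with
  | zero => simp [lintegral_comp_jump_zero]
  | succ n ih =>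
    calc ∑ k ∈ Finset.range (n + 1), ∫⁻ ω, ENNReal.ofReal (M.hold k ω) ∂M.μ x +
          ∫⁻ ω, V (M.jump (n + 1) ω) ∂M.μ x
        = ∑ k ∈ Finset.range n, ∫⁻ ω, ENNReal.ofReal (M.hold k ω) ∂M.μ x +
          (∫⁻ ω, M.meanHold (M.jump n ω) ∂M.μ x +
            ∫⁻ ω, ∑' z, M.transProb (M.jump n ω) z * V z ∂M.μ x) := by
          rw [Finset.sum_range_succ, lintegral_hold, lintegral_comp_jump_succ, add_assoc]
      _ ≤ ∑ k ∈ Finset.range n, ∫⁻ ω, ENNReal.ofReal (M.hold k ω) ∂M.μ x +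
          ∫⁻ ω, V (M.jump n ω) ∂M.μ x := by
          gcongr
          exact (le_lintegral_add _ _).trans (lintegral_mono fun ω => hV _)
      _ ≤ V x := ih

theorem lintegral_zeta_le_of_drift {V : M.X → ℝ≥0∞}
    (hV : ∀ y, M.meanHold y + ∑' z, M.transProb y z * V z ≤ V y) (x : M.X) :
    ∫⁻ ω, M.zeta ω ∂M.μ x ≤ V x := by
  rw [lintegral_zeta, ENNReal.tsum_eq_iSup_nat]
  exact iSup_le fun n => le_self_add.trans (M.sum_lintegral_hold_add_lintegral_le_of_drift hV x n)

lemma tsum_P_mul_eq (f : M.X → ℝ) (x : M.X) :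
    ∑' y, M.P x y * f y = f x + M.gen f x / M.γ x := by
  have hγ := (M.γ_pos x).ne'
  have h : (fun y => M.P x y * f y) = fun y => (if y = x then 0 else M.Γ x y * f y) / M.γ x := by
    funext y
    simp only [P]
    split_ifs <;> ring
  rw [h, tsum_div_const, gen]
  field_simp
  ring

lemma tsum_transProb_mul_ofReal {f : M.X → ℝ} (hf : M.InDom f) (hf0 : ∀ x, 0 ≤ f x) (x : M.X) :
    ∑' y, M.transProb x y * ENNReal.ofReal (f y) = ENNReal.ofReal (f x + M.gen f x / M.γ x) := by
  have hsum : Summable fun y => M.P x y * f y := by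
    refine ((hf x).div_const (M.γ x)).congr fun y => ?_
    simp only [P]
    split_ifs <;> ring
  simp_rw [transProb, ← ENNReal.ofReal_mul (M.P_nonneg x _)]
  rw [← ENNReal.ofReal_tsum_of_nonneg (fun y => mul_nonneg (M.P_nonneg x y) (hf0 y)) hsum,
    tsum_P_mul_eq]

lemma meanHold_add_le_of_gen_le {f : M.X → ℝ} (hf : M.InDom f) (hf0 : ∀ x, 0 ≤ f x) {x : M.X}
    {c : ℝ} (hc : 0 < c) (hdrift : M.gen f x ≤ -c) :
    M.meanHold x + (ENNReal.ofReal c)⁻¹ * ∑' y, M.transProb x y * ENNReal.ofReal (f y) ≤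
      (ENNReal.ofReal c)⁻¹ * ENNReal.ofReal (f x) := by
  have hγ := M.γ_pos x
  have hmean : 0 ≤ f x + M.gen f x / M.γ x :=
    M.tsum_P_mul_eq f x ▸ tsum_nonneg fun y => mul_nonneg (M.P_nonneg x y) (hf0 y)
  rw [M.tsum_transProb_mul_ofReal hf hf0, meanHold, ← ENNReal.ofReal_inv_of_pos hc,
    ← ENNReal.ofReal_mul (inv_nonneg.2 hc.le), ← ENNReal.ofReal_mul (inv_nonneg.2 hc.le),
    ← ENNReal.ofReal_add (inv_nonneg.2 hγ.le) (mul_nonneg (inv_nonneg.2 hc.le) hmean)]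
  refine ENNReal.ofReal_le_ofReal ?_
  have : c⁻¹ * (M.gen f x / M.γ x) ≤ -(M.γ x)⁻¹ := by
    rw [mul_div_assoc', div_le_iff₀ hγ, neg_mul, inv_mul_cancel₀ hγ.ne', inv_mul_le_iff₀ hc]
    linarith
  linarith [mul_add c⁻¹ (f x) (M.gen f x / M.γ x)]

theorem meanHold_add_tsum_le_of_gen_le {f : M.X → ℝ} (hf : M.InDom f) (hfpos : ∀ x, 0 < f x)
    {g : ℝ → ℝ} (hgpos : ∀ y, 0 < y → 0 < g y) (hgmono : MonotoneOn g (Ioi 0))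
    (hdrift : ∀ x, M.gen f x ≤ -g (f x)) (x : M.X) :
    M.meanHold x + ∑' y, M.transProb x y * ∫⁻ s in Ioc 0 (f y), (ENNReal.ofReal (g s))⁻¹ ≤
      ∫⁻ s in Ioc 0 (f x), (ENNReal.ofReal (g s))⁻¹ := by
  set Φ : ℝ → ℝ≥0∞ := fun u => ∫⁻ s in Ioc 0 u, (ENNReal.ofReal (g s))⁻¹
  set c := (ENNReal.ofReal (g (f x)))⁻¹
  have hφ : AntitoneOn (fun s => (ENNReal.ofReal (g s))⁻¹) (Ioi 0) := fun a ha b hb hab =>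
    ENNReal.inv_le_inv.2 (ENNReal.ofReal_le_ofReal (hgmono ha hb hab))
  have hc : c * ENNReal.ofReal (f x) ≠ ⊤ :=
    ENNReal.mul_ne_top (by simpa [c] using hgpos _ (hfpos x)) ENNReal.ofReal_ne_top
  have hconcave : ∑' y, M.transProb x y * Φ (f y) + c * ENNReal.ofReal (f x) ≤
      Φ (f x) + c * ∑' y, M.transProb x y * ENNReal.ofReal (f y) := by
    calc ∑' y, M.transProb x y * Φ (f y) + c * ENNReal.ofReal (f x)
        = ∑' y, M.transProb x y * (Φ (f y) + c * ENNReal.ofReal (f x)) := by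
          simp_rw [mul_add, ENNReal.tsum_add, ENNReal.tsum_mul_right, tsum_transProb, one_mul]
      _ ≤ ∑' y, M.transProb x y * (Φ (f x) + c * ENNReal.ofReal (f y)) :=
          ENNReal.tsum_le_tsum fun y => mul_le_mul_right
            (lintegral_Ioc_zero_add_mul_le hφ (hfpos x) (hfpos y)) _
      _ = Φ (f x) + c * ∑' y, M.transProb x y * ENNReal.ofReal (f y) := by
          simp_rw [mul_add, ENNReal.tsum_add, ENNReal.tsum_mul_right, tsum_transProb, one_mul,
            mul_left_comm _ c, ENNReal.tsum_mul_left]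
  refine ENNReal.le_of_add_le_add_right hc ?_
  calc M.meanHold x + ∑' y, M.transProb x y * Φ (f y) + c * ENNReal.ofReal (f x)
      ≤ M.meanHold x + (Φ (f x) + c * ∑' y, M.transProb x y * ENNReal.ofReal (f y)) := by
        rw [add_assoc]
        gcongr
    _ ≤ Φ (f x) + c * ENNReal.ofReal (f x) := by
        rw [add_left_comm]
        gcongr
        exact M.meanHold_add_le_of_gen_le hf (fun y => (hfpos y).le) (hgpos _ (hfpos x)) (hdrift x)

end CTMC


open CTMC in
/-- Proposition (explosion via a modulated drift condition): if `f` is bounded,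
strictly positive, `g` is increasing on `(0,∞)` with `∫_0^b dy/g(y) < ∞`
(where `b = sup f`), and `Γ f(x) ≤ -g(f(x))` everywhere, then the explosion
time is integrable from every starting point. -/
theorem statement4 (M : CTMC) (f : M.X → ℝ) (hf : M.InDomPos f)
    (hfpos : ∀ x, 0 < f x) (hbdd : BddAbove (Set.range f))
    (b : ℝ) (hb : b = ⨆ x, f x)
    (g : ℝ → ℝ) (hgpos : ∀ y : ℝ, 0 < y → 0 < g y)
    (hgmono : MonotoneOn g (Set.Ioi 0))
    (hgint : ∫⁻ y in Set.Ioc (0:ℝ) b, (ENNReal.ofReal (g y))⁻¹ < ⊤)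
    (hdrift : ∀ x : M.X, M.gen f x ≤ -g (f x)) :
    ∀ x : M.X, ∫⁻ ω, M.zeta ω ∂ M.μ x < ⊤ := by
  intro x
  have hfb : f x ≤ b := hb ▸ le_ciSup hbdd x
  calc ∫⁻ ω, M.zeta ω ∂M.μ x ≤ ∫⁻ s in Ioc 0 (f x), (ENNReal.ofReal (g s))⁻¹ :=
        M.lintegral_zeta_le_of_drift
          (M.meanHold_add_tsum_le_of_gen_le hf.2 hfpos hgpos hgmono hdrift) x
    _ ≤ ∫⁻ s in Ioc 0 b, (ENNReal.ofReal (g s))⁻¹ := lintegral_mono_set (Ioc_subset_Ioc_right hfb)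
    _ < ⊤ := hgint
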